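/- Let X be a set equipped with two Hausdorff topologies τ and ρ, with ρ finer than τ, and let E ⊂ X be (τ,ρ)-LRC. Then there exists a τ-open set V such that E ⊆ cl_τ(E) ∩ V ⊆ cl_ρ(E), and cl_τ(E) ∩ V is also (τ,ρ)-LRC (here cl_τ and cl_ρ denote closure in the respective topologies). -/

import Mathlib

/-!
Cover `E` by `τ`-open sets `U` with `cl_ρ (E ∩ U)` `ρ`-compact and let `V` be their union.
A `ρ`-compact set is `τ`-compact, hence `τ`-closed since `τ` is Hausdorff, so
`cl_τ E ∩ U ⊆ cl_τ (E ∩ U) ⊆ cl_ρ (E ∩ U)` for each such `U`. This gives `cl_τ E ∩ V ⊆ cl_ρ E`,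
and the same `U` witness local relative compactness of `cl_τ E ∩ V`.
-/

open Set Topology

noncomputable section

/-- `E` is `τ`-locally relatively `ρ`-compact: every point of `E` has a `τ`-open
neighbourhood `U` such that the `ρ`-closure of `E ∩ U` is `ρ`-compact. -/
def IsLRC {X : Type*} (t r : TopologicalSpace X) (E : Set X) : Prop :=
  ∀ x ∈ E, ∃ U : Set X, @IsOpen X t U ∧ x ∈ U ∧ @IsCompact X r (@closure X r (E ∩ U))

section TwoTopologies

variable {X : Type*} {t r : TopologicalSpace X}

theorem IsCompact.isClosed_of_le [@T2Space X t] (hle : r ≤ t) {K : Set X}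
    (hK : @IsCompact X r K) : IsClosed[t] K := by
  have hKt : @IsCompact X t K := by
    simpa using @IsCompact.image X X r t K id hK (continuous_id_of_le hle)
  exact @IsCompact.isClosed X t _ K hKt

theorem closure_inter_subset_closure_inter_of_le [@T2Space X t] (hle : r ≤ t) {E U : Set X}
    (hU : IsOpen[t] U) (hK : @IsCompact X r (closure[r] (E ∩ U))) :
    closure[t] E ∩ U ⊆ closure[r] (E ∩ U) :=
  -- both `t` and `r` are local instances; this makes instance search find `t`
  letI := t
  (hU.closure_inter).trans <| closure_minimal (@subset_closure X r _) (hK.isClosed_of_le hle)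

end TwoTopologies

theorem stmt9 {X : Type*} (t r : TopologicalSpace X)
    (ht2 : @T2Space X t) (hfiner : r ≤ t)
    (E : Set X) (hE : IsLRC t r E) :
    ∃ V : Set X, @IsOpen X t V ∧
      E ⊆ @closure X t E ∩ V ∧
      @closure X t E ∩ V ⊆ @closure X r E ∧
      IsLRC t r (@closure X t E ∩ V) := by
  choose! U hUo hxU hUc using hE
  have hsub : ∀ x ∈ E, closure[t] E ∩ U x ⊆ closure[r] (E ∩ U x) := fun x hx =>
    closure_inter_subset_closure_inter_of_le hfiner (hUo x hx) (hUc x hx)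
  refine ⟨⋃ x ∈ E, U x, @isOpen_biUnion X X t E U hUo,
    fun x hx => ⟨@subset_closure X t E x hx, mem_biUnion hx (hxU x hx)⟩, ?_, ?_⟩
  · rintro y ⟨hyE, hyV⟩
    obtain ⟨x, hx, hyU⟩ := mem_iUnion₂.mp hyV
    exact @closure_mono X r _ _ inter_subset_left y (hsub x hx ⟨hyE, hyU⟩)
  · rintro y ⟨-, hyV⟩
    obtain ⟨x, hx, hyU⟩ := mem_iUnion₂.mp hyV
    refine ⟨U x, hUo x hx, hyU, (hUc x hx).of_isClosed_subset isClosed_closure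
      (closure_minimal ?_ isClosed_closure)⟩
    rintro z ⟨⟨hzE, -⟩, hzU⟩
    exact hsub x hx ⟨hzE, hzU⟩

end
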